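/- In the multi-unit model, there exists a constant M1, depending only on k and the parameters (v, p, d) (and in particular independent of B and N), such that for every capacity B ∈ ℕ and every arrival count vector N ∈ ℕ^k, OPT_d(N) − IND_d(N) ≤ M1, where OPT_d(N) is the maximum of f_d over all x ∈ ℕ^k with x ≤ N (past counts 0), and IND_d(N) is the maximum of f_d over all index solutions x ∈ ℕ^k with x ≤ N (past counts 0). -/

import Mathlib

open Finset

/-- PMF of a Binomial(m, p) random variable at value `s`. -/
noncomputable def binomPMF (p : ℝ) (m s : ℕ) : ℝ :=
  (m.choose s : ℝ) * p ^ s * (1 - p) ^ (m - s)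

/-- Expectation of `g` applied to a vector of independent binomial random variables,
where coordinate `j` is Binomial(x j, p j). -/
noncomputable def jointExp {k : ℕ} (p : Fin k → ℝ) (x : Fin k → ℕ)
    (g : (Fin k → ℕ) → ℝ) : ℝ :=
  ∑ a ∈ Fintype.piFinset (fun j => Finset.range (x j + 1)),
    (∏ j, binomPMF (p j) (x j) (a j)) * g a

open Classical in
/-- Probability of the event `E` for a vector of independent binomial random
variables, coordinate `j` being Binomial(x j, p j). -/
noncomputable def jointProb {k : ℕ} (p : Fin k → ℝ) (x : Fin k → ℕ)
    (E : (Fin k → ℕ) → Prop) : ℝ :=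
  jointExp p x (fun a => if E a then 1 else 0)

/-- P[S(x) ≥ B], where S(x) = Σ_j X_{j, x_j} is Poisson binomial. -/
noncomputable def showTail {k : ℕ} (p : Fin k → ℝ) (x : Fin k → ℕ) (B : ℕ) : ℝ :=
  jointProb p x (fun a => B ≤ ∑ j, a j)

/-- Expected compensation V_B(x) = E[(S(x) − B)^+]. -/
noncomputable def VB {k : ℕ} (p : Fin k → ℝ) (B : ℕ) (x : Fin k → ℕ) : ℝ :=
  jointExp p x (fun a => max ((∑ j, a j : ℝ) - B) 0)

/-- Objective of the offline problem with past accepted counts `y`: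
f(x) = Σ_j v_j (y_j + x_j) − V_B(y + x). -/
noncomputable def objFn {k : ℕ} (v p : Fin k → ℝ) (B : ℕ) (y x : Fin k → ℕ) : ℝ :=
  ∑ j, v j * ((y j : ℝ) + (x j : ℝ)) - VB p B (fun j => y j + x j)

/-- Feasibility for the offline problem with demand bounds `n`. -/
def Feasible {k : ℕ} (n x : Fin k → ℕ) : Prop := ∀ j, x j ≤ n j

/-- `x` is locally optimal at `j`: `x j` is the largest element of the argmax,
over `z ∈ {0,…,n j}`, of `z · v_j − V_B(y + x + (z − x_j)·e_j)`. -/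
def LocallyOpt {k : ℕ} (v p : Fin k → ℝ) (B : ℕ) (n y : Fin k → ℕ)
    (x : Fin k → ℕ) (j : Fin k) : Prop :=
  ∀ z ≤ n j,
    ((z : ℝ) * v j - VB p B (fun i => y i + Function.update x j z i)
        ≤ (x j : ℝ) * v j - VB p B (fun i => y i + x i)) ∧
    (x j < z →
      (z : ℝ) * v j - VB p B (fun i => y i + Function.update x j z i)
        < (x j : ℝ) * v j - VB p B (fun i => y i + x i))

/-- `t` witnesses that `x` is an index solution for bounds `n`:
all bounds exhausted below `t`, nothing accepted above `t`. -/
def IndexWitness {k : ℕ} (n x : Fin k → ℕ) (t : Fin k) : Prop :=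
  (∀ j, j < t → x j = n j) ∧ (∀ j, t < j → x j = 0)

/-- `x` is an index solution for bounds `n`. -/
def IsIndexSol {k : ℕ} (n x : Fin k → ℕ) : Prop := ∃ t, IndexWitness n x t

/-- `t` is the (smallest possible) threshold index of the index solution `x`. -/
def ThresholdIndex {k : ℕ} (n x : Fin k → ℕ) (t : Fin k) : Prop :=
  IndexWitness n x t ∧ ∀ t' : Fin k, t' < t → ¬ IndexWitness n x t'

/-- Optimal value of the offline problem with past counts `y` and bounds `n`. -/
noncomputable def OptVal {k : ℕ} (v p : Fin k → ℝ) (B : ℕ) (y n : Fin k → ℕ) : ℝ :=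
  sSup {r : ℝ | ∃ x, Feasible n x ∧ r = objFn v p B y x}

/-- Optimal value of the offline problem restricted to index solutions. -/
noncomputable def IndOptVal {k : ℕ} (v p : Fin k → ℝ) (B : ℕ) (y n : Fin k → ℕ) : ℝ :=
  sSup {r : ℝ | ∃ x, Feasible n x ∧ IsIndexSol n x ∧ r = objFn v p B y x}

/-- Multi-unit expected compensation `V^d_B(x) = E[(S_d(x) − B)^+]`, where
`S_d(x) = Σ_j d_j · X_{j,x_j}`. -/
noncomputable def VdB {k : ℕ} (p : Fin k → ℝ) (d : Fin k → ℕ) (B : ℕ)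
    (x : Fin k → ℕ) : ℝ :=
  jointExp p x (fun a => max ((∑ j, (d j : ℝ) * (a j : ℝ)) - (B : ℝ)) 0)

/-- Multi-unit offline objective with past counts `y`:
`f_d(x) = Σ_j v_j (y_j + x_j) − V^d_B(y + x)`. -/
noncomputable def objFnD {k : ℕ} (v p : Fin k → ℝ) (d : Fin k → ℕ) (B : ℕ)
    (y x : Fin k → ℕ) : ℝ :=
  ∑ j, v j * ((y j : ℝ) + (x j : ℝ)) - VdB p d B (fun j => y j + x j)

/-- `P[S_d(x) ≥ b]` for an integer threshold `b`. -/
noncomputable def showTailD {k : ℕ} (p : Fin k → ℝ) (d : Fin k → ℕ)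
    (x : Fin k → ℕ) (b : ℤ) : ℝ :=
  jointProb p x (fun a => b ≤ ∑ j, (d j : ℤ) * (a j : ℤ))

/-- Multi-unit local optimality at `i`: `x i` is the largest element of the
argmax, over `z ∈ {0,…,n i}`, of `z · v_i − V^d_B(y + x + (z − x_i)·e_i)`. -/
def LocallyOptD {k : ℕ} (v p : Fin k → ℝ) (d : Fin k → ℕ) (B : ℕ)
    (n y : Fin k → ℕ) (x : Fin k → ℕ) (i : Fin k) : Prop :=
  ∀ z ≤ n i,
    ((z : ℝ) * v i - VdB p d B (fun m => y m + Function.update x i z m)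
        ≤ (x i : ℝ) * v i - VdB p d B (fun m => y m + x m)) ∧
    (x i < z →
      (z : ℝ) * v i - VdB p d B (fun m => y m + Function.update x i z m)
        < (x i : ℝ) * v i - VdB p d B (fun m => y m + x m))

/-- Optimal value of the multi-unit offline problem with past counts `y`,
bounds `n`. -/
noncomputable def OptValD {k : ℕ} (v p : Fin k → ℝ) (d : Fin k → ℕ) (B : ℕ)
    (y n : Fin k → ℕ) : ℝ :=
  sSup {r : ℝ | ∃ x, Feasible n x ∧ r = objFnD v p d B y x}

/-- Optimal value of the multi-unit offline problem restricted to index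
solutions. -/
noncomputable def IndOptValD {k : ℕ} (v p : Fin k → ℝ) (d : Fin k → ℕ) (B : ℕ)
    (y n : Fin k → ℕ) : ℝ :=
  sSup {r : ℝ | ∃ x, Feasible n x ∧ IsIndexSol n x ∧ r = objFnD v p d B y x}


/-!
For a feasible `x`, the largest index solution `y` whose expected load `∑ d_j p_j y_j` does
not exceed that of `x` is within `K = ∑ d_j` of it. Put `δ_j = d_j p_j (y_j - x_j)`; the revenue
gained by `y` is `∑ q_j δ_j = q_t ∑ δ_j + ∑ (q_j - q_t) δ_j`, where `t` is the threshold of `y`.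
Because `y` takes everything below `t` and nothing above it, `δ_j` has the sign of `q_j - q_t`,
so the smallest gap `g` between critical ratios makes the second sum at least
`g ∑_{j ≠ t} |δ_j|`.

On the compensation side, couple `x` and `y` through their common part `x ⊓ y`. Conditionally on
it, with `s` its load minus `B` and `S` the remaining load, `E[(s + S)⁺]` lies between
`(s + E S)⁺` and `(s + E S)⁺ + Var S / (2η) + η / 2`; the extra load of `y` has variance at most
`K ∑ |δ_j|`. Taking `η = K / g`, this variance penalty is paid for by the revenue gain, which
leaves a loss bound independent of `B` and `N`.
-/
theorem binomPMF_nonneg {p : ℝ} (hp₀ : 0 ≤ p) (hp₁ : p ≤ 1) (m s : ℕ) :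
    0 ≤ binomPMF p m s := by
  have : 0 ≤ 1 - p := by linarith
  unfold binomPMF
  positivity

theorem binomPMF_of_lt {p : ℝ} {m s : ℕ} (h : m < s) : binomPMF p m s = 0 := by
  simp [binomPMF, Nat.choose_eq_zero_of_lt h]

theorem binomPMF_succ_zero (p : ℝ) (m : ℕ) :
    binomPMF p (m + 1) 0 = (1 - p) * binomPMF p m 0 := by
  simp [binomPMF, pow_succ, mul_comm]

theorem binomPMF_succ_succ (p : ℝ) (m s : ℕ) :
    binomPMF p (m + 1) (s + 1) = (1 - p) * binomPMF p m (s + 1) + p * binomPMF p m s := by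
  rcases lt_trichotomy s m with h | rfl | h
  · obtain ⟨r, rfl⟩ := Nat.exists_eq_add_of_lt h
    simp only [binomPMF, Nat.choose_succ_succ, Nat.cast_add,
      show s + r + 1 + 1 - (s + 1) = r + 1 by omega, show s + r + 1 - (s + 1) = r by omega,
      show s + r + 1 - s = r + 1 by omega]
    ring
  · simp [binomPMF, pow_succ, mul_comm]
  · simp [binomPMF_of_lt, h, Nat.lt_succ_of_lt h]

theorem sum_binomPMF_succ_mul (p : ℝ) (m : ℕ) (h : ℕ → ℝ) :
    ∑ s ∈ range (m + 2), binomPMF p (m + 1) s * h s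
      = (1 - p) * ∑ s ∈ range (m + 1), binomPMF p m s * h s
        + p * ∑ s ∈ range (m + 1), binomPMF p m s * h (s + 1) := by
  have hshift : ∑ s ∈ range (m + 1), binomPMF p m s * h s
      = ∑ s ∈ range (m + 1), binomPMF p m (s + 1) * h (s + 1) + binomPMF p m 0 * h 0 := by
    rw [sum_range_succ', sum_range_succ (fun s => binomPMF p m (s + 1) * h (s + 1)),
      binomPMF_of_lt (Nat.lt_succ_self m), zero_mul, add_zero]
  simp only [sum_range_succ' _ (m + 1), binomPMF_succ_succ, binomPMF_succ_zero, add_mul,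
    sum_add_distrib, mul_assoc, ← mul_sum, hshift]
  ring

theorem sum_piFinset_eq_sum_sum_update {ι M : Type*} [Fintype ι] [DecidableEq ι]
    [AddCommMonoid M] (t : ι → Finset ℕ) (j : ι) (G : (ι → ℕ) → M) :
    ∑ a ∈ Fintype.piFinset t, G a
      = ∑ s ∈ t j, ∑ a ∈ Fintype.piFinset (Function.update t j {0}),
          G (Function.update a j s) := by
  rw [← sum_product']
  refine sum_nbij' (fun a => (a j, Function.update a j 0)) (fun q => Function.update q.2 j q.1)
    ?_ ?_ ?_ ?_ ?_
  · intro a ha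
    simp only [mem_product, Fintype.mem_piFinset] at ha ⊢
    refine ⟨ha j, fun i => ?_⟩
    rcases eq_or_ne i j with rfl | hi <;> simp [*]
  · rintro ⟨s, a⟩ h
    simp only [mem_product, Fintype.mem_piFinset] at h ⊢
    intro i
    rcases eq_or_ne i j with rfl | hi
    · simpa using h.1
    · simpa [hi] using h.2 i
  · intro a _
    simp
  · rintro ⟨s, a⟩ h
    simp only [mem_product, Fintype.mem_piFinset] at h
    have : a j = 0 := by simpa using h.2 j
    simp [← this]
  · intro a _
    simp

theorem Pi.induction_add_single {ι : Type*} [Finite ι] [DecidableEq ι] {P : (ι → ℕ) → Prop}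
    (zero : P 0) (step : ∀ r i, P r → P (r + Pi.single i 1)) (r : ι → ℕ) : P r := by
  suffices h : ∀ g, P g → P (g + r) by simpa using h 0 zero
  induction r using Pi.single_induction with
  | zero => simp
  | add f f' hf hf' => exact fun g hg => add_assoc g f f' ▸ hf' _ (hf g hg)
  | single i m =>
    induction m with
    | zero => simp
    | succ m ih =>
      intro g hg
      simpa [Pi.single_add, add_assoc] using step _ i (ih g hg)

section jointExp

variable {k : ℕ} (p : Fin k → ℝ)

theorem jointExp_eq_sum_update (x : Fin k → ℕ) (j : Fin k) (F : (Fin k → ℕ) → ℝ) :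
    jointExp p x F = ∑ s ∈ range (x j + 1), binomPMF (p j) (x j) s *
      jointExp p (Function.update x j 0) (fun a => F (Function.update a j s)) := by
  have hbox : (fun i => range (Function.update x j 0 i + 1))
      = Function.update (fun i => range (x i + 1)) j {0} := by
    funext i
    rcases eq_or_ne i j with rfl | hi <;> simp [*]
  unfold jointExp
  rw [sum_piFinset_eq_sum_sum_update _ j, hbox]
  refine sum_congr rfl fun s _ => ?_
  rw [mul_sum]
  refine sum_congr rfl fun a ha => ?_
  have ha0 : a j = 0 := by simpa using Fintype.mem_piFinset.1 ha j
  rw [← mul_prod_erase univ _ (mem_univ j), ← mul_prod_erase univ _ (mem_univ j)]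
  have hrest : ∏ i ∈ univ.erase j, binomPMF (p i) (x i) (Function.update a j s i)
      = ∏ i ∈ univ.erase j, binomPMF (p i) (Function.update x j 0 i) (a i) :=
    prod_congr rfl fun i hi => by simp [Function.update_of_ne (ne_of_mem_erase hi)]
  rw [hrest]
  simp only [binomPMF, Function.update_self, ha0, Nat.choose_self, Nat.cast_one, pow_zero,
    mul_one, tsub_self, one_mul]
  ring

theorem jointExp_counts_add_single (x : Fin k → ℕ) (j : Fin k) (F : (Fin k → ℕ) → ℝ) :
    jointExp p (x + Pi.single j 1) F
      = (1 - p j) * jointExp p x F + p j * jointExp p x (fun a => F (a + Pi.single j 1)) := by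
  have hupd : Function.update (x + Pi.single j 1) j 0 = Function.update x j 0 := by
    funext i
    rcases eq_or_ne i j with rfl | hi <;> simp [*]
  have hshift : ∀ (a : Fin k → ℕ) (s : ℕ),
      Function.update a j s + Pi.single j 1 = Function.update a j (s + 1) := by
    intro a s
    funext i
    rcases eq_or_ne i j with rfl | hi <;> simp [*]
  have hshifted := jointExp_eq_sum_update p x j (fun a => F (a + Pi.single j 1))
  rw [hshifted, jointExp_eq_sum_update p _ j, jointExp_eq_sum_update p x j F, hupd]
  simp only [Pi.add_apply, Pi.single_eq_same, hshift]
  exact sum_binomPMF_succ_mul (p j) (x j) _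

theorem jointExp_zero_counts (F : (Fin k → ℕ) → ℝ) : jointExp p 0 F = F 0 := by
  simp only [jointExp, Pi.zero_apply, zero_add, range_one, Fintype.piFinset_singleton, binomPMF,
    zero_tsub, pow_zero, mul_one, sum_singleton, Nat.choose_self, Nat.cast_one, prod_const_one,
    one_mul]
  rfl

theorem jointExp_add (x : Fin k → ℕ) (F G : (Fin k → ℕ) → ℝ) :
    jointExp p x (fun a => F a + G a) = jointExp p x F + jointExp p x G := by
  simp only [jointExp, mul_add, sum_add_distrib]

theorem jointExp_const_mul (x : Fin k → ℕ) (c : ℝ) (F : (Fin k → ℕ) → ℝ) :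
    jointExp p x (fun a => c * F a) = c * jointExp p x F := by
  simp only [jointExp, mul_sum, mul_left_comm]

theorem jointExp_counts_add (x r : Fin k → ℕ) (F : (Fin k → ℕ) → ℝ) :
    jointExp p (x + r) F = jointExp p x (fun u => jointExp p r (fun b => F (u + b))) := by
  induction r using Pi.induction_add_single generalizing F with
  | zero => simp [jointExp_zero_counts]
  | step r j ih =>
    simp only [← add_assoc, jointExp_counts_add_single, ih, ← jointExp_const_mul,
      ← jointExp_add]

theorem jointExp_const (x : Fin k → ℕ) (c : ℝ) : jointExp p x (fun _ => c) = c := by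
  induction x using Pi.induction_add_single with
  | zero => exact jointExp_zero_counts p _
  | step x j ih => rw [jointExp_counts_add_single, ih]; ring

variable {p}

theorem jointExp_mono (hp : ∀ j, 0 ≤ p j ∧ p j ≤ 1) (x : Fin k → ℕ)
    {F G : (Fin k → ℕ) → ℝ} (h : ∀ a, F a ≤ G a) : jointExp p x F ≤ jointExp p x G :=
  sum_le_sum fun a _ => mul_le_mul_of_nonneg_left (h a)
    (prod_nonneg fun j _ => binomPMF_nonneg (hp j).1 (hp j).2 _ _)

theorem jointExp_nonneg (hp : ∀ j, 0 ≤ p j ∧ p j ≤ 1) (x : Fin k → ℕ)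
    {F : (Fin k → ℕ) → ℝ} (h : ∀ a, 0 ≤ F a) : 0 ≤ jointExp p x F :=
  jointExp_const p x 0 ▸ jointExp_mono hp x h

end jointExp

section load

variable {k : ℕ} (p : Fin k → ℝ) (d : Fin k → ℕ)

def load (a : Fin k → ℕ) : ℝ := ∑ j, (d j : ℝ) * (a j : ℝ)

def expectedLoad (r : Fin k → ℕ) : ℝ := ∑ j, (d j : ℝ) * p j * (r j : ℝ)

def loadVariance (r : Fin k → ℕ) : ℝ := ∑ j, (d j : ℝ) ^ 2 * (p j * (1 - p j)) * (r j : ℝ)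

theorem load_add (a b : Fin k → ℕ) : load d (a + b) = load d a + load d b := by
  simp only [load, Pi.add_apply, Nat.cast_add, mul_add, sum_add_distrib]

theorem load_single (j : Fin k) : load d (Pi.single j 1) = d j := by
  simp [load, Pi.single_apply]

theorem expectedLoad_add (r s : Fin k → ℕ) :
    expectedLoad p d (r + s) = expectedLoad p d r + expectedLoad p d s := by
  simp only [expectedLoad, Pi.add_apply, Nat.cast_add, mul_add, sum_add_distrib]

theorem expectedLoad_single (j : Fin k) : expectedLoad p d (Pi.single j 1) = d j * p j := by
  simp [expectedLoad, Pi.single_apply]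

theorem loadVariance_add_single (r : Fin k → ℕ) (j : Fin k) :
    loadVariance p d (r + Pi.single j 1) = loadVariance p d r + d j ^ 2 * (p j * (1 - p j)) := by
  simp [loadVariance, Pi.single_apply, mul_add, sum_add_distrib]

theorem jointExp_load (r : Fin k → ℕ) : jointExp p r (load d) = expectedLoad p d r := by
  induction r using Pi.induction_add_single with
  | zero => simp [jointExp_zero_counts, load, expectedLoad]
  | step r j ih =>
    simp only [jointExp_counts_add_single, load_add, load_single, jointExp_add, jointExp_const, ih,
      expectedLoad_add, expectedLoad_single]
    ring

theorem jointExp_sq_load_sub_expectedLoad (r : Fin k → ℕ) (c : ℝ) :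
    jointExp p r (fun b => (load d b - expectedLoad p d r + c) ^ 2)
      = loadVariance p d r + c ^ 2 := by
  induction r using Pi.induction_add_single generalizing c with
  | zero => simp [jointExp_zero_counts, load, expectedLoad, loadVariance]
  | step r j ih =>
    have hstay : ∀ b, load d b - expectedLoad p d (r + Pi.single j 1) + c
        = load d b - expectedLoad p d r + (c - d j * p j) := fun b => by
      rw [expectedLoad_add, expectedLoad_single]; ring
    have hmove : ∀ b, load d (b + Pi.single j 1) - expectedLoad p d (r + Pi.single j 1) + c
        = load d b - expectedLoad p d r + (c + d j * (1 - p j)) := fun b => by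
      rw [expectedLoad_add, expectedLoad_single, load_add, load_single]; ring
    rw [jointExp_counts_add_single]
    simp only [hmove]
    simp only [hstay, ih, loadVariance_add_single]
    ring

end load

section compensation

variable {k : ℕ} {p : Fin k → ℝ} (d : Fin k → ℕ)

theorem abs_le_sq_div_add {y η : ℝ} (hη : 0 < η) : |y| ≤ y ^ 2 / (2 * η) + η / 2 := by
  rw [div_add_div _ _ (by positivity) (by positivity), le_div_iff₀ (by positivity)]
  nlinarith [sq_nonneg (|y| - η), sq_abs y]

theorem jointExp_max_load_le (hp : ∀ j, 0 ≤ p j ∧ p j ≤ 1) {η : ℝ} (hη : 0 < η)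
    (r : Fin k → ℕ) (t : ℝ) :
    jointExp p r (fun b => max (t + load d b) 0)
      ≤ max (t + expectedLoad p d r) 0 + loadVariance p d r / (2 * η) + η / 2 := by
  set m := expectedLoad p d r
  have hpt : ∀ b, max (t + load d b) 0
      ≤ max (t + m) 0 + ((2 * η)⁻¹ * (load d b - m) ^ 2 + η / 2) := fun b => by
    have h₁ := abs_max_sub_max_le_abs (t + load d b) (t + m) 0
    have h₂ := abs_le_sq_div_add (y := load d b - m) hη
    rw [add_sub_add_left_eq_sub] at h₁
    rw [← div_eq_inv_mul]
    linarith [le_abs_self (max (t + load d b) 0 - max (t + m) 0)]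
  have hvar : jointExp p r (fun b => (load d b - m) ^ 2) = loadVariance p d r := by
    simpa using jointExp_sq_load_sub_expectedLoad p d r 0
  refine (jointExp_mono hp r hpt).trans_eq ?_
  rw [jointExp_add, jointExp_add, jointExp_const_mul, jointExp_const, jointExp_const, hvar]
  ring

theorem max_add_expectedLoad_le_jointExp (hp : ∀ j, 0 ≤ p j ∧ p j ≤ 1) (r : Fin k → ℕ)
    (t : ℝ) : max (t + expectedLoad p d r) 0 ≤ jointExp p r (fun b => max (t + load d b) 0) := by
  refine max_le ?_ (jointExp_nonneg hp r fun b => le_max_right _ _)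
  calc t + expectedLoad p d r = jointExp p r (fun b => t + load d b) := by
        rw [jointExp_add, jointExp_const, jointExp_load]
    _ ≤ _ := jointExp_mono hp r fun b => le_max_left _ _

theorem jointExp_max_load_le_jointExp (hp : ∀ j, 0 ≤ p j ∧ p j ≤ 1) {η : ℝ} (hη : 0 < η)
    (r s : Fin k → ℕ) (t : ℝ) :
    jointExp p r (fun b => max (t + load d b) 0)
      ≤ jointExp p s (fun b => max (t + load d b) 0)
        + |expectedLoad p d r - expectedLoad p d s| + loadVariance p d r / (2 * η) + η / 2 := by
  have h₁ := jointExp_max_load_le d hp hη r t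
  have h₂ := max_add_expectedLoad_le_jointExp d hp s t
  have h₃ := abs_max_sub_max_le_abs (t + expectedLoad p d r) (t + expectedLoad p d s) 0
  rw [add_sub_add_left_eq_sub] at h₃
  linarith [le_abs_self (max (t + expectedLoad p d r) 0 - max (t + expectedLoad p d s) 0)]

theorem VdB_eq_jointExp (B : ℕ) (x : Fin k → ℕ) :
    VdB p d B x = jointExp p x (fun a => max (load d a - B) 0) := rfl

theorem VdB_le (hp : ∀ j, 0 ≤ p j ∧ p j ≤ 1) {η : ℝ} (hη : 0 < η) (B : ℕ) (x y : Fin k → ℕ) :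
    VdB p d B y ≤ VdB p d B x + |expectedLoad p d y - expectedLoad p d x|
      + loadVariance p d (y - x) / (2 * η) + η / 2 := by
  have hsplit : ∀ r, VdB p d B (x ⊓ y + r)
      = jointExp p (x ⊓ y) (fun u => jointExp p r (fun b => max (load d u - B + load d b) 0)) :=
    fun r => by
      rw [VdB_eq_jointExp, jointExp_counts_add]
      simp only [load_add, add_sub_right_comm]
  have hy : x ⊓ y + (y - x) = y := by
    ext j
    simp only [Pi.add_apply, Pi.inf_apply, Pi.sub_apply]
    omega
  have hx : x ⊓ y + (x - y) = x := by
    ext j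
    simp only [Pi.add_apply, Pi.inf_apply, Pi.sub_apply]
    omega
  have hmean : expectedLoad p d (y - x) - expectedLoad p d (x - y)
      = expectedLoad p d y - expectedLoad p d x := by
    have ey := congrArg (expectedLoad p d) hy
    have ex := congrArg (expectedLoad p d) hx
    rw [expectedLoad_add] at ey ex
    linarith
  have hmono := jointExp_mono hp (x ⊓ y) fun u =>
    jointExp_max_load_le_jointExp d hp hη (y - x) (x - y) (load d u - B)
  rwa [jointExp_add, jointExp_add, jointExp_add, jointExp_const, jointExp_const, jointExp_const,
    ← hsplit, ← hsplit, hx, hy, hmean] at hmono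

end compensation

section index

variable {k : ℕ}

theorem IndexWitness.add_single {N y : Fin k → ℕ} {t t' : Fin k} (hy : IndexWitness N y t)
    (hyN : y ≤ N) (ht' : y t' < N t') (hmin : ∀ j, j < t' → N j ≤ y j) :
    IndexWitness N (y + Pi.single t' 1) t' := by
  have htt' : t ≤ t' := not_lt.1 fun h => ht'.ne (hy.1 t' h)
  constructor
  · intro j hj
    simpa [Pi.single_apply, hj.ne] using le_antisymm (hyN j) (hmin j hj)
  · intro j hj
    simpa [Pi.single_apply, hj.ne'] using hy.2 j (htt'.trans_lt hj)

theorem exists_isIndexSol_near [NeZero k] {w : Fin k → ℝ} (hw : ∀ j, 0 ≤ w j) {W : ℝ}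
    (hW : ∀ j, w j ≤ W) {N x : Fin k → ℕ} (hx : x ≤ N) :
    ∃ y, y ≤ N ∧ IsIndexSol N y ∧ |∑ j, w j * (y j : ℝ) - ∑ j, w j * (x j : ℝ)| ≤ W := by
  classical
  set ℓ : (Fin k → ℕ) → ℝ := fun z => ∑ j, w j * (z j : ℝ)
  have hℓ_mono : Monotone ℓ := fun a b hab =>
    sum_le_sum fun j _ => mul_le_mul_of_nonneg_left (Nat.cast_le.2 (hab j)) (hw j)
  have hℓ_single : ∀ z j, ℓ (z + Pi.single j 1) = ℓ z + w j := fun z j => by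
    simp [ℓ, Pi.single_apply, mul_add, sum_add_distrib]
  set S := (Fintype.piFinset fun j => range (N j + 1)).filter
    (fun z => IsIndexSol N z ∧ ℓ z ≤ ℓ x)
  have hmemS : ∀ z, z ∈ S ↔ z ≤ N ∧ IsIndexSol N z ∧ ℓ z ≤ ℓ x := fun z => by
    simp [S, Fintype.mem_piFinset, Pi.le_def]
  have h0 : (0 : Fin k → ℕ) ∈ S := (hmemS 0).2
    ⟨fun j => Nat.zero_le _, ⟨0, fun j hj => absurd hj (Fin.not_lt_zero j), fun _ _ => rfl⟩,
      hℓ_mono (fun j => Nat.zero_le _)⟩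
  -- Maximising the number of units rather than `ℓ` keeps the argument valid when some `w j = 0`.
  obtain ⟨y, hyS, hmax⟩ := S.exists_max_image (fun z => ∑ j, z j) ⟨0, h0⟩
  obtain ⟨hyN, ⟨t, hyt⟩, hyx⟩ := (hmemS y).1 hyS
  have hW0 : 0 ≤ W := (hw 0).trans (hW 0)
  refine ⟨y, hyN, ⟨t, hyt⟩, abs_le.2 ⟨?_, by linarith⟩⟩
  change -W ≤ ℓ y - ℓ x
  by_contra hfar
  obtain ⟨j, hj⟩ : ∃ j, y j < N j := by
    by_contra! hfull
    have hxy := hℓ_mono hx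
    rw [← le_antisymm hyN hfull] at hxy
    linarith
  obtain ⟨t', ht', hmin⟩ := (univ.filter fun j => y j < N j).exists_min_image id
    ⟨j, by simpa using hj⟩
  rw [mem_filter] at ht'
  have hnext : y + Pi.single t' 1 ∈ S := by
    refine (hmemS _).2 ⟨fun i => ?_, ⟨t', hyt.add_single hyN ht'.2 fun i hi => ?_⟩, ?_⟩
    · rcases eq_or_ne i t' with rfl | hi
      · simpa using ht'.2
      · simpa [hi] using hyN i
    · exact not_lt.1 fun h => hi.not_ge (hmin i (by simpa using h))
    · rw [hℓ_single]
      linarith [hW t']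
  have := hmax _ hnext
  simp [sum_add_distrib] at this

theorem gap_mul_sum_abs_le {q δ : Fin k → ℝ} {t : Fin k} {g : ℝ} (hg : 0 ≤ g)
    (hgap : ∀ i j, i < j → g ≤ q i - q j) (hlt : ∀ j, j < t → 0 ≤ δ j)
    (hgt : ∀ j, t < j → δ j ≤ 0) :
    g * ∑ j, |δ j| ≤ g * |∑ j, δ j| + 2 * ∑ j, (q j - q t) * δ j := by
  have hterm : ∀ j ∈ univ.erase t, g * |δ j| ≤ (q j - q t) * δ j := fun j hj => by
    rcases lt_or_gt_of_ne (ne_of_mem_erase hj) with h | h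
    · rw [abs_of_nonneg (hlt j h)]
      exact mul_le_mul_of_nonneg_right (hgap j t h) (hlt j h)
    · rw [abs_of_nonpos (hgt j h)]
      nlinarith [hgap t j h, hgt j h]
  have hG : g * ∑ j ∈ univ.erase t, |δ j| ≤ ∑ j, (q j - q t) * δ j := by
    rw [mul_sum, ← add_sum_erase _ _ (mem_univ t), sub_self, zero_mul, zero_add]
    exact sum_le_sum hterm
  have hδt : |δ t| ≤ |∑ j, δ j| + ∑ j ∈ univ.erase t, |δ j| := by
    rw [← add_sum_erase _ _ (mem_univ t)]
    calc |δ t| = |(δ t + ∑ j ∈ univ.erase t, δ j) - ∑ j ∈ univ.erase t, δ j| := by ring_nf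
      _ ≤ _ := (abs_sub _ _).trans (add_le_add le_rfl (abs_sum_le_sum_abs _ _))
  rw [← add_sum_erase _ _ (mem_univ t), mul_add]
  nlinarith [mul_le_mul_of_nonneg_left hδt hg]

end index

theorem StrictAnti.exists_pos_le_sub {ι : Type*} [Preorder ι] [Finite ι] {f : ι → ℝ}
    (hf : StrictAnti f) : ∃ g > 0, ∀ i j, i < j → g ≤ f i - f j := by
  have hev : ∀ᶠ g in nhdsWithin (0 : ℝ) (Set.Ioi 0), ∀ i j, i < j → g ≤ f i - f j := by
    refine Filter.eventually_all.2 fun i => Filter.eventually_all.2 fun j => ?_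
    by_cases hij : i < j
    · filter_upwards [nhdsWithin_le_nhds (eventually_le_nhds (sub_pos.2 (hf hij)))] with g hg
      exact fun _ => hg
    · exact Filter.Eventually.of_forall fun _ h => absurd h hij
  obtain ⟨g, hg, hgap⟩ := (hev.and self_mem_nhdsWithin).exists
  exact ⟨g, hgap, hg⟩

section loss

variable {k : ℕ} {v p : Fin k → ℝ} {d : Fin k → ℕ}

noncomputable def criticalRatio (v p : Fin k → ℝ) (d : Fin k → ℕ) (j : Fin k) : ℝ :=
  v j / ((d j : ℝ) * p j)

theorem objFnD_zero (B : ℕ) (x : Fin k → ℕ) :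
    objFnD v p d B (fun _ => 0) x = ∑ j, v j * (x j : ℝ) - VdB p d B x := by
  simp [objFnD]

theorem sum_mul_sub_sum_mul_eq (hdp : ∀ j, (d j : ℝ) * p j ≠ 0) (x y : Fin k → ℕ)
    (t : Fin k) :
    ∑ j, v j * (y j : ℝ) - ∑ j, v j * (x j : ℝ)
      = criticalRatio v p d t * (expectedLoad p d y - expectedLoad p d x)
        + ∑ j, (criticalRatio v p d j - criticalRatio v p d t)
          * ((d j : ℝ) * p j * ((y j : ℝ) - x j)) := by
  simp only [expectedLoad, ← sum_sub_distrib, mul_sum, ← sum_add_distrib]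
  refine sum_congr rfl fun j _ => ?_
  have hvq : criticalRatio v p d j * ((d j : ℝ) * p j) = v j := div_mul_cancel₀ _ (hdp j)
  rw [← hvq]
  ring

theorem loadVariance_tsub_le (hp : ∀ j, 0 ≤ p j ∧ p j ≤ 1) {K : ℝ} (hK : ∀ j, (d j : ℝ) ≤ K)
    (x y : Fin k → ℕ) :
    loadVariance p d (y - x) ≤ K * ∑ j, |(d j : ℝ) * p j * ((y j : ℝ) - x j)| := by
  rw [mul_sum]
  refine sum_le_sum fun j _ => ?_
  have htsub : ((y j - x j : ℕ) : ℝ) ≤ |(y j : ℝ) - x j| := by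
    rcases le_total (x j) (y j) with h | h
    · rw [Nat.cast_sub h]; exact le_abs_self _
    · rw [Nat.sub_eq_zero_of_le h, Nat.cast_zero]; exact abs_nonneg _
  have hd0 : (0 : ℝ) ≤ d j := Nat.cast_nonneg _
  rw [abs_mul, abs_of_nonneg (mul_nonneg hd0 (hp j).1), Pi.sub_apply]
  calc (d j : ℝ) ^ 2 * (p j * (1 - p j)) * ((y j - x j : ℕ) : ℝ)
      = (d j * (1 - p j)) * (d j * p j * ((y j - x j : ℕ) : ℝ)) := by ring
    _ ≤ K * (d j * p j * |(y j : ℝ) - x j|) :=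
      mul_le_mul ((mul_le_of_le_one_right hd0 (by linarith [(hp j).1])).trans (hK j))
        (mul_le_mul_of_nonneg_left htsub (mul_nonneg hd0 (hp j).1))
        (mul_nonneg (mul_nonneg hd0 (hp j).1) (Nat.cast_nonneg _)) (hd0.trans (hK j))

theorem objFnD_le_of_indexWitness (hp : ∀ j, 0 < p j ∧ p j ≤ 1) (hd : ∀ j, 0 < d j)
    (hv : ∀ j, 0 < v j) (hq : ∀ j, v j ≤ (d j : ℝ) * p j) {g : ℝ} (hg : 0 < g)
    (hgap : ∀ i j, i < j → g ≤ criticalRatio v p d i - criticalRatio v p d j)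
    {K : ℝ} (hK : ∀ j, (d j : ℝ) ≤ K) {N x y : Fin k → ℕ} {t : Fin k} (hx : x ≤ N)
    (hy : IndexWitness N y t) (B : ℕ) :
    objFnD v p d B (fun _ => 0) x ≤ objFnD v p d B (fun _ => 0) y
      + (2 + g / 2) * |expectedLoad p d y - expectedLoad p d x| + K / (2 * g) := by
  set q := criticalRatio v p d
  set δ : Fin k → ℝ := fun j => (d j : ℝ) * p j * ((y j : ℝ) - x j)
  set ε := expectedLoad p d y - expectedLoad p d x
  have hp' : ∀ j, 0 ≤ p j ∧ p j ≤ 1 := fun j => ⟨(hp j).1.le, (hp j).2⟩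
  have hdp : ∀ j, 0 < (d j : ℝ) * p j := fun j => mul_pos (Nat.cast_pos.2 (hd j)) (hp j).1
  have hK0 : 0 < K := (Nat.cast_pos.2 (hd t)).trans_le (hK t)
  have hε : ε = ∑ j, δ j := by
    simp only [ε, δ, expectedLoad, ← sum_sub_distrib, mul_sub]
  have hrevenue : ∑ j, v j * (y j : ℝ) - ∑ j, v j * (x j : ℝ)
      = q t * ε + ∑ j, (q j - q t) * δ j := sum_mul_sub_sum_mul_eq (fun j => (hdp j).ne') x y t
  have hqε : -(q t * ε) ≤ |ε| := by
    have hqt : |q t| ≤ 1 := by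
      change |v t / ((d t : ℝ) * p t)| ≤ 1
      rw [abs_of_pos (div_pos (hv t) (hdp t))]
      exact (div_le_one (hdp t)).2 (hq t)
    refine (neg_le_abs _).trans ?_
    rw [abs_mul]
    exact mul_le_of_le_one_left (abs_nonneg _) hqt
  have hgap_sum := gap_mul_sum_abs_le (δ := δ) (t := t) hg.le hgap
    (fun j hj => by
      simp only [δ, hy.1 j hj]
      exact mul_nonneg (hdp j).le (sub_nonneg.2 (Nat.cast_le.2 (hx j))))
    (fun j hj => mul_nonpos_of_nonneg_of_nonpos (hdp j).le (by simp [hy.2 j hj]))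
  rw [← hε] at hgap_sum
  have hV : VdB p d B y ≤ VdB p d B x + |ε| + loadVariance p d (y - x) / (2 * (K / g))
      + K / g / 2 := VdB_le d hp' (div_pos hK0 hg) B x y
  set Δ := ∑ j, |δ j|
  have hvar : loadVariance p d (y - x) / (2 * (K / g)) ≤ g * Δ / 2 := by
    rw [div_le_iff₀ (by positivity)]
    calc loadVariance p d (y - x) ≤ K * Δ := loadVariance_tsub_le hp' hK x y
      _ = g * Δ / 2 * (2 * (K / g)) := by field_simp
  have hη : K / g / 2 = K / (2 * g) := by ring
  rw [objFnD_zero, objFnD_zero]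
  linarith

end loss

theorem OptValD_le_IndOptValD_add {k : ℕ} {v p : Fin k → ℝ} {d : Fin k → ℕ}
    (hp : ∀ j, 0 ≤ p j ∧ p j ≤ 1) (hv : ∀ j, 0 ≤ v j) {B : ℕ} {y₀ N : Fin k → ℕ} {M : ℝ}
    (h : ∀ x, Feasible N x →
      ∃ y, Feasible N y ∧ IsIndexSol N y ∧ objFnD v p d B y₀ x ≤ objFnD v p d B y₀ y + M) :
    OptValD v p d B y₀ N ≤ IndOptValD v p d B y₀ N + M := by
  have hbdd : BddAbove {r : ℝ | ∃ y, Feasible N y ∧ IsIndexSol N y ∧ r = objFnD v p d B y₀ y} := by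
    refine ⟨∑ j, v j * ((y₀ j : ℝ) + N j), ?_⟩
    rintro _ ⟨y, hy, -, rfl⟩
    have hV : 0 ≤ VdB p d B (fun j => y₀ j + y j) :=
      jointExp_nonneg hp _ fun a => le_max_right _ _
    have hrev : ∑ j, v j * ((y₀ j : ℝ) + y j) ≤ ∑ j, v j * ((y₀ j : ℝ) + N j) :=
      sum_le_sum fun j _ => mul_le_mul_of_nonneg_left (by gcongr; exact hy j) (hv j)
    rw [objFnD]
    linarith
  refine csSup_le ⟨_, 0, fun j => Nat.zero_le _, rfl⟩ ?_
  rintro _ ⟨x, hx, rfl⟩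
  obtain ⟨y, hy, hyI, hxy⟩ := h x hx
  exact hxy.trans (add_le_add_left (le_csSup hbdd ⟨y, hy, hyI, rfl⟩) M)

theorem index_loss_bounded_multi_general {k : ℕ} (v p : Fin k → ℝ) (d : Fin k → ℕ)
    (hk : 1 ≤ k)
    (hp : ∀ j, 0 < p j ∧ p j < 1)
    (hd : ∀ j, 0 < d j)
    (hv : ∀ j, 0 < v j)
    (hq1 : ∀ j, v j < (d j : ℝ) * p j)
    (hord : ∀ i j : Fin k, i < j →
      v j / ((d j : ℝ) * p j) < v i / ((d i : ℝ) * p i))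
    : ∃ M1 : ℝ, ∀ (B : ℕ) (N : Fin k → ℕ),
      OptValD v p d B (fun _ => 0) N - IndOptValD v p d B (fun _ => 0) N ≤ M1 := by
  have : NeZero k := ⟨by omega⟩
  have hp₁ : ∀ j, 0 < p j ∧ p j ≤ 1 := fun j => ⟨(hp j).1, (hp j).2.le⟩
  have hp₀₁ : ∀ j, 0 ≤ p j ∧ p j ≤ 1 := fun j => ⟨(hp j).1.le, (hp j).2.le⟩
  obtain ⟨g, hg, hgap⟩ := StrictAnti.exists_pos_le_sub (f := criticalRatio v p d) hord
  set K := ∑ j, (d j : ℝ)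
  have hdK : ∀ j, (d j : ℝ) ≤ K := fun j =>
    single_le_sum (f := fun j => (d j : ℝ)) (fun i _ => Nat.cast_nonneg _) (mem_univ j)
  refine ⟨(2 + g / 2) * K + K / (2 * g), fun B N => sub_le_iff_le_add'.2 ?_⟩
  refine OptValD_le_IndOptValD_add hp₀₁ (fun j => (hv j).le) fun x hx => ?_
  obtain ⟨y, hyN, ⟨t, hyt⟩, hnear⟩ := exists_isIndexSol_near (w := fun j => (d j : ℝ) * p j)
    (fun j => (mul_pos (Nat.cast_pos.2 (hd j)) (hp j).1).le)
    (fun j => mul_le_of_le_one_right (Nat.cast_nonneg _) (hp₁ j).2 |>.trans (hdK j)) hx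
  refine ⟨y, hyN, ⟨t, hyt⟩, ?_⟩
  have hloss := objFnD_le_of_indexWitness hp₁ hd hv (fun j => (hq1 j).le) hg hgap hdK hx hyt B
  have : (2 + g / 2) * |expectedLoad p d y - expectedLoad p d x| ≤ (2 + g / 2) * K :=
    mul_le_mul_of_nonneg_left hnear (by positivity)
  linarith

/-- **Theorem 1 (Ext): bounded loss of the clairvoyant index policy in the
multi-unit model.**  There is a constant `M1` depending only on `k`, `v`, `p`,
`d` (independent of `B` and `N`) with `OPT_d(N) − IND_d(N) ≤ M1` for all `B, N`. -/
theorem index_loss_bounded_multi {k : ℕ} (v p : Fin k → ℝ) (d : Fin k → ℕ)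
    (hk : 1 ≤ k)
    (hp : ∀ j, 0 < p j ∧ p j < 1)
    (hrat : ∀ j, ∃ q : ℚ, p j = (q : ℝ))
    (hd : ∀ j, 0 < d j)
    (hv : ∀ j, 0 < v j)
    (hq1 : ∀ j, v j < (d j : ℝ) * p j)
    (hord : ∀ i j : Fin k, i < j →
      v j / ((d j : ℝ) * p j) < v i / ((d i : ℝ) * p i))
    : ∃ M1 : ℝ, ∀ (B : ℕ) (N : Fin k → ℕ),
      OptValD v p d B (fun _ => 0) N - IndOptValD v p d B (fun _ => 0) N ≤ M1 :=
  index_loss_bounded_multi_general v p d hk hp hd hv hq1 hord
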